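/- Let W : [0,1]² → [0,1] be an A₁-Lipschitz graphon and let Wₙ be the step graphon induced by sampling W at the n regularly spaced points uᵢ = (i−1)/n. Let T_W and T_{Wₙ} be the corresponding integral operators on L²([0,1]), and for k ≥ 1 let λ_k(T) = inf over subspaces S with dim S = k−1 of sup over unit X ∈ S^⊥ of ⟨T X, X⟩ denote the k-th Courant–Fischer min-max value. Then for every k ≥ 1, |λ_k(T_W) − λ_k(T_{Wₙ})| ≤ √(A₁)/√n. -/

import Mathlib

open Set MeasureTheory
open scoped RealInnerProductSpace ENNReal Classical

/-- Lebesgue measure restricted to the unit interval `[0,1]`. -/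
noncomputable def μ01 : Measure ℝ := volume.restrict (Icc (0:ℝ) 1)

/-- The integral operator with kernel `K` acting on `L²([0,1])`:
`(T_K X)(v) = ∫₀¹ K(u,v) X(u) du`. -/
noncomputable def kernelOp (K : ℝ → ℝ → ℝ) (X : Lp ℝ 2 μ01) : Lp ℝ 2 μ01 :=
  if h : MemLp (fun v => ∫ u, K u v * X u ∂μ01) 2 μ01 then
    h.toLp (fun v => ∫ u, K u v * X u ∂μ01)
  else 0

/-- The `k`-th Courant–Fischer min-max value of an operator `T` on `L²([0,1])`:
`λ_k(T) = inf_{S, dim S = k-1} sup_{X ∈ S^⊥, ‖X‖ = 1} ⟪T X, X⟫`. -/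
noncomputable def minmaxValue (T : Lp ℝ 2 μ01 → Lp ℝ 2 μ01) (k : ℕ) : ℝ :=
  ⨅ S : {S : Submodule ℝ (Lp ℝ 2 μ01) // Module.finrank ℝ S = k - 1},
    ⨆ X : {X : Lp ℝ 2 μ01 // X ∈ (S.1)ᗮ ∧ ‖X‖ = 1}, ⟪T X.1, X.1⟫

/-- The sample point associated to `u ∈ [0,1]` for the regular partition of `[0,1]` into `n`
intervals `Iᵢ = [(i-1)/n, i/n]`: for `u ∈ Iᵢ` this is `uᵢ = (i-1)/n` (for `u = 1` it is
`(n-1)/n`, i.e. `u = 1` is placed in the last interval `Iₙ`). -/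
noncomputable def samplePoint (n : ℕ) (u : ℝ) : ℝ :=
  ((min ⌊(n : ℝ) * u⌋ ((n : ℤ) - 1) : ℤ) : ℝ) / (n : ℝ)

/-!
The min-max value `λ_k` is an infimum of suprema of the quadratic form `X ↦ ⟪T X, X⟫` over unit
vectors, so it moves by at most `ε` when the quadratic form does. For `T_W` and `T_{Wₙ}` the
quadratic forms differ by `∫∫ (W - Wₙ)(u,v) X(u) X(v)`, which by Cauchy–Schwarz on `[0,1]²` is at
most `‖W - Wₙ‖_{L²}` for a unit vector `X`. As `|W - Wₙ| ≤ 1`, the Lipschitz bound gives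
`‖W - Wₙ‖²_{L²} ≤ ∫∫ |W - Wₙ| ≤ A₁ ∫∫ ((u - uᵢ) + (v - uⱼ)) = A₁ / n`, because
`u - uᵢ = fract(n u) / n` has mean `1 / (2n)` on `[0,1]`.
-/
namespace Real

variable {ι : Sort*} {f g : ι → ℝ} {ε : ℝ}

-- Also when `f` is unbounded above: then so is `g`, and both suprema are the junk value `0`.
theorem abs_iSup_sub_iSup_le (hε : 0 ≤ ε) (h : ∀ i, |f i - g i| ≤ ε) :
    |(⨆ i, f i) - ⨆ i, g i| ≤ ε := by
  have hfg : ∀ i, f i ≤ g i + ε := fun i => by linarith [(abs_le.1 (h i)).2]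
  have hgf : ∀ i, g i ≤ f i + ε := fun i => by linarith [(abs_le.1 (h i)).1]
  have hbdd : ∀ {f g : ι → ℝ}, (∀ i, g i ≤ f i + ε) → BddAbove (range f) → BddAbove (range g) :=
    fun hle ⟨b, hb⟩ => ⟨b + ε, forall_mem_range.2 fun i =>
      (hle i).trans (add_le_add_left (hb (mem_range_self i)) ε)⟩
  rcases isEmpty_or_nonempty ι with hι | hι
  · simpa using hε
  by_cases hf : BddAbove (range f)
  · have hg := hbdd hgf hf
    refine abs_sub_le_iff.2 ⟨?_, ?_⟩ <;> rw [sub_le_iff_le_add'] <;> refine ciSup_le fun i => ?_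
    · linarith [hfg i, le_ciSup hg i]
    · linarith [hgf i, le_ciSup hf i]
  · rw [iSup_of_not_bddAbove hf, iSup_of_not_bddAbove (mt (hbdd hfg) hf), sub_self, abs_zero]
    exact hε

theorem abs_iInf_sub_iInf_le (hε : 0 ≤ ε) (h : ∀ i, |f i - g i| ≤ ε) :
    |(⨅ i, f i) - ⨅ i, g i| ≤ ε := by
  have key := abs_iSup_sub_iSup_le (f := fun i => -1 * f i) (g := fun i => -1 * g i) hε
    fun i => by rw [← mul_sub, abs_mul, abs_neg, abs_one, one_mul]; exact h i
  rwa [← mul_iInf_of_nonpos (by norm_num), ← mul_iInf_of_nonpos (by norm_num), ← mul_sub,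
    abs_mul, abs_neg, abs_one, one_mul] at key

end Real

theorem abs_minmaxValue_sub_le {T T' : Lp ℝ 2 μ01 → Lp ℝ 2 μ01} {ε : ℝ} (hε : 0 ≤ ε)
    (h : ∀ X : Lp ℝ 2 μ01, ‖X‖ = 1 → |⟪T X, X⟫ - ⟪T' X, X⟫| ≤ ε) (k : ℕ) :
    |minmaxValue T k - minmaxValue T' k| ≤ ε :=
  Real.abs_iInf_sub_iInf_le hε fun _ => Real.abs_iSup_sub_iSup_le hε fun X => h X.1 X.2.2

section L2

variable {α : Type*} [MeasurableSpace α] {μ : Measure α}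

theorem MeasureTheory.MemLp.inner_toLp_eq_integral_mul {f g : α → ℝ} (hf : MemLp f 2 μ)
    (hg : MemLp g 2 μ) : ⟪hf.toLp f, hg.toLp g⟫ = ∫ a, f a * g a ∂μ := by
  rw [L2.inner_def]
  refine integral_congr_ae ?_
  filter_upwards [hf.coeFn_toLp, hg.coeFn_toLp] with a hfa hga
  simp [hfa, hga, mul_comm]

theorem abs_integral_mul_le_sqrt_mul_sqrt {f g : α → ℝ} (hf : MemLp f 2 μ) (hg : MemLp g 2 μ) :
    |∫ a, f a * g a ∂μ| ≤ √(∫ a, f a ^ 2 ∂μ) * √(∫ a, g a ^ 2 ∂μ) := by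
  have hnorm : ∀ {h : α → ℝ} (hh : MemLp h 2 μ), ‖hh.toLp h‖ = √(∫ a, h a ^ 2 ∂μ) := fun hh => by
    simp only [norm_eq_sqrt_real_inner, hh.inner_toLp_eq_integral_mul hh, sq]
  rw [← hf.inner_toLp_eq_integral_mul hg, ← hnorm hf, ← hnorm hg]
  exact abs_real_inner_le_norm _ _

theorem MeasureTheory.Lp.integral_sq_eq_norm_sq (X : Lp ℝ 2 μ) : ∫ a, X a ^ 2 ∂μ = ‖X‖ ^ 2 := by
  rw [← real_inner_self_eq_norm_sq, L2.inner_def]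
  simp [sq]

theorem MeasureTheory.Lp.memLp_mul_prod [SFinite μ] (X : Lp ℝ 2 μ) :
    MemLp (fun z : α × α => X z.1 * X z.2) 2 (μ.prod μ) := by
  have hXsq : Integrable (fun a => X a ^ 2) μ := (Lp.memLp X).integrable_sq
  refine (memLp_two_iff_integrable_sq ?_).2 ?_
  · exact ((Lp.aestronglyMeasurable X).comp_quasiMeasurePreserving
      Measure.quasiMeasurePreserving_fst).mul
      ((Lp.aestronglyMeasurable X).comp_quasiMeasurePreserving Measure.quasiMeasurePreserving_snd)
  · simpa only [mul_pow] using hXsq.mul_prod hXsq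

theorem abs_integral_mul_mul_le [SFinite μ] {D : α × α → ℝ} (hD : MemLp D 2 (μ.prod μ))
    (X : Lp ℝ 2 μ) :
    |∫ z, D z * (X z.1 * X z.2) ∂μ.prod μ| ≤ √(∫ z, D z ^ 2 ∂μ.prod μ) * ‖X‖ ^ 2 := by
  refine (abs_integral_mul_le_sqrt_mul_sqrt hD (Lp.memLp_mul_prod X)).trans_eq ?_
  simp only [mul_pow]
  rw [integral_prod_mul (fun a => X a ^ 2) (fun a => X a ^ 2), Lp.integral_sq_eq_norm_sq,
    Real.sqrt_mul_self (sq_nonneg _)]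

end L2

instance : IsProbabilityMeasure μ01 := ⟨by simp [μ01]⟩

theorem ae_mem_Icc_prod_μ01 :
    ∀ᵐ z ∂μ01.prod μ01, z.1 ∈ Icc (0 : ℝ) 1 ∧ z.2 ∈ Icc (0 : ℝ) 1 := by
  rw [μ01, Measure.prod_restrict]
  exact ae_restrict_mem (measurableSet_Icc.prod measurableSet_Icc)

section samplePoint

variable {n : ℕ}

theorem measurable_samplePoint (n : ℕ) : Measurable (samplePoint n) := by
  unfold samplePoint; fun_prop

theorem samplePoint_le (hn : 0 < n) (u : ℝ) : samplePoint n u ≤ u := by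
  have hn' : (0 : ℝ) < n := Nat.cast_pos.2 hn
  rw [samplePoint, div_le_iff₀ hn', mul_comm u]
  calc ((min ⌊(n : ℝ) * u⌋ ((n : ℤ) - 1) : ℤ) : ℝ) ≤ ⌊(n : ℝ) * u⌋ := by
        exact_mod_cast min_le_left _ _
    _ ≤ n * u := Int.floor_le _

theorem samplePoint_mem_Icc (hn : 0 < n) {u : ℝ} (hu : u ∈ Icc (0 : ℝ) 1) :
    samplePoint n u ∈ Icc (0 : ℝ) 1 := by
  have hn' : (0 : ℝ) < n := Nat.cast_pos.2 hn
  have h0 : (0 : ℤ) ≤ min ⌊(n : ℝ) * u⌋ ((n : ℤ) - 1) :=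
    le_min (Int.floor_nonneg.2 (mul_nonneg hn'.le hu.1)) (by omega)
  have h1 : ((min ⌊(n : ℝ) * u⌋ ((n : ℤ) - 1) : ℤ) : ℝ) ≤ n := by
    have : min ⌊(n : ℝ) * u⌋ ((n : ℤ) - 1) ≤ n := (min_le_right _ _).trans (by omega)
    exact_mod_cast this
  exact ⟨div_nonneg (by exact_mod_cast h0) hn'.le, (div_le_one hn').2 h1⟩

theorem sub_samplePoint_eq_fract (hn : 0 < n) {u : ℝ} (hu : u ∈ Ico (0 : ℝ) 1) :
    u - samplePoint n u = Int.fract (n * u) / n := by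
  have hn' : (0 : ℝ) < n := Nat.cast_pos.2 hn
  have hfloor : ⌊(n : ℝ) * u⌋ ≤ (n : ℤ) - 1 := by
    have : ⌊(n : ℝ) * u⌋ < n := Int.floor_lt.2 (by push_cast; nlinarith [hu.2])
    omega
  rw [samplePoint, min_eq_left hfloor, Int.fract]
  field_simp

theorem integral_fract_zero_one : ∫ t in (0 : ℝ)..1, Int.fract t = 1 / 2 := by
  rw [intervalIntegral.integral_of_le zero_le_one, integral_Ioc_eq_integral_Ioo,
    setIntegral_congr_fun measurableSet_Ioo fun t ht => Int.fract_eq_self.2 ⟨ht.1.le, ht.2⟩,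
    ← integral_Ioc_eq_integral_Ioo, ← intervalIntegral.integral_of_le zero_le_one, integral_id]
  norm_num

theorem intervalIntegrable_fract (a b : ℝ) : IntervalIntegrable Int.fract volume a b :=
  intervalIntegrable_const.mono_fun' measurable_fract.aestronglyMeasurable
    (Filter.Eventually.of_forall fun t => by
      simpa [abs_of_nonneg (Int.fract_nonneg t)] using (Int.fract_lt_one t).le)

theorem integral_sub_samplePoint (hn : 0 < n) :
    ∫ u, (u - samplePoint n u) ∂μ01 = 1 / (2 * n) := by
  have hn' : (n : ℝ) ≠ 0 := Nat.cast_ne_zero.2 hn.ne'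
  have hperiodic : ∫ t in (0 : ℝ)..n, Int.fract t = n * (1 / 2) := by
    simpa [integral_fract_zero_one] using
      (Int.fract_periodic ℝ).intervalIntegral_add_zsmul_eq n 0 intervalIntegrable_fract
  calc ∫ u, (u - samplePoint n u) ∂μ01
      = ∫ u in (0 : ℝ)..1, Int.fract (n * u) / n := by
        rw [μ01, integral_Icc_eq_integral_Ioo,
          setIntegral_congr_fun measurableSet_Ioo fun u hu =>
            sub_samplePoint_eq_fract hn ⟨hu.1.le, hu.2⟩,
          ← integral_Ioc_eq_integral_Ioo, ← intervalIntegral.integral_of_le zero_le_one]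
    _ = 1 / (2 * n) := by
        rw [intervalIntegral.integral_div, intervalIntegral.integral_comp_mul_left _ hn',
          mul_zero, mul_one, hperiodic, smul_eq_mul]
        field_simp

theorem integrable_sub_samplePoint (hn : 0 < n) :
    Integrable (fun u => u - samplePoint n u) μ01 := by
  refine Integrable.of_bound (measurable_id.sub (measurable_samplePoint n)).aestronglyMeasurable
    1 ?_
  filter_upwards [ae_restrict_mem measurableSet_Icc] with u hu
  rw [Real.norm_eq_abs, abs_of_nonneg (sub_nonneg.2 (samplePoint_le hn u))]
  linarith [(samplePoint_mem_Icc hn hu).1, hu.2]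

end samplePoint

section kernel

variable {K L : ℝ → ℝ → ℝ} {c : ℝ}

theorem memLp_uncurry_of_bounded (hK : Measurable (Function.uncurry K))
    (hKb : ∀ u ∈ Icc (0 : ℝ) 1, ∀ v ∈ Icc (0 : ℝ) 1, |K u v| ≤ c) :
    MemLp (Function.uncurry K) 2 (μ01.prod μ01) :=
  MemLp.of_bound hK.aestronglyMeasurable c <| by
    filter_upwards [ae_mem_Icc_prod_μ01] with z hz using hKb z.1 hz.1 z.2 hz.2

theorem memLp_integral_kernel_mul (hK : Measurable (Function.uncurry K))
    (hKb : ∀ u ∈ Icc (0 : ℝ) 1, ∀ v ∈ Icc (0 : ℝ) 1, |K u v| ≤ c) (X : Lp ℝ 2 μ01) :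
    MemLp (fun v => ∫ u, K u v * X u ∂μ01) 2 μ01 := by
  have hX : Integrable X μ01 := (Lp.memLp X).integrable one_le_two
  refine MemLp.of_bound ?_ (∫ u, c * |X u| ∂μ01) ?_
  · exact ((hK.comp measurable_swap).aestronglyMeasurable.mul
      ((Lp.aestronglyMeasurable X).comp_quasiMeasurePreserving
        Measure.quasiMeasurePreserving_snd)).integral_prod_right'
  · filter_upwards [ae_restrict_mem measurableSet_Icc] with v hv
    refine norm_integral_le_of_norm_le (hX.abs.const_mul c) ?_
    filter_upwards [ae_restrict_mem measurableSet_Icc] with u hu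
    rw [norm_mul, Real.norm_eq_abs, Real.norm_eq_abs]
    exact mul_le_mul_of_nonneg_right (hKb u hu v hv) (abs_nonneg _)

theorem integrable_kernel_mul_mul (hK : Measurable (Function.uncurry K))
    (hKb : ∀ u ∈ Icc (0 : ℝ) 1, ∀ v ∈ Icc (0 : ℝ) 1, |K u v| ≤ c) (X : Lp ℝ 2 μ01) :
    Integrable (fun z : ℝ × ℝ => K z.1 z.2 * (X z.1 * X z.2)) (μ01.prod μ01) :=
  (memLp_uncurry_of_bounded hK hKb).integrable_mul (Lp.memLp_mul_prod X)

theorem inner_kernelOp_self (hK : Measurable (Function.uncurry K))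
    (hKb : ∀ u ∈ Icc (0 : ℝ) 1, ∀ v ∈ Icc (0 : ℝ) 1, |K u v| ≤ c) (X : Lp ℝ 2 μ01) :
    ⟪kernelOp K X, X⟫ = ∫ z, K z.1 z.2 * (X z.1 * X z.2) ∂μ01.prod μ01 := by
  have hmem := memLp_integral_kernel_mul hK hKb X
  have hint := integrable_kernel_mul_mul hK hKb X
  calc ⟪kernelOp K X, X⟫ = ∫ v, (∫ u, K u v * X u ∂μ01) * X v ∂μ01 := by
        rw [kernelOp, dif_pos hmem, L2.inner_def]
        refine integral_congr_ae ?_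
        filter_upwards [hmem.coeFn_toLp] with v hv
        simp [hv, mul_comm]
    _ = ∫ v, ∫ u, K u v * (X u * X v) ∂μ01 ∂μ01 := by
        simp only [← mul_assoc, integral_mul_const]
    _ = ∫ z, K z.1 z.2 * (X z.1 * X z.2) ∂μ01.prod μ01 := by
        rw [integral_integral_swap (f := fun v u => K u v * (X u * X v)) hint.swap,
          integral_prod _ hint]

theorem abs_inner_kernelOp_sub_le (hK : Measurable (Function.uncurry K))
    (hL : Measurable (Function.uncurry L))
    (hKb : ∀ u ∈ Icc (0 : ℝ) 1, ∀ v ∈ Icc (0 : ℝ) 1, |K u v| ≤ c)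
    (hLb : ∀ u ∈ Icc (0 : ℝ) 1, ∀ v ∈ Icc (0 : ℝ) 1, |L u v| ≤ c) (X : Lp ℝ 2 μ01) :
    |⟪kernelOp K X, X⟫ - ⟪kernelOp L X, X⟫|
      ≤ √(∫ z, (K z.1 z.2 - L z.1 z.2) ^ 2 ∂μ01.prod μ01) * ‖X‖ ^ 2 := by
  have hD : MemLp (fun z : ℝ × ℝ => K z.1 z.2 - L z.1 z.2) 2 (μ01.prod μ01) :=
    (memLp_uncurry_of_bounded hK hKb).sub (memLp_uncurry_of_bounded hL hLb)
  rw [inner_kernelOp_self hK hKb, inner_kernelOp_self hL hLb,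
    ← integral_sub (integrable_kernel_mul_mul hK hKb X) (integrable_kernel_mul_mul hL hLb X)]
  simpa only [sub_mul] using abs_integral_mul_mul_le hD X

end kernel

theorem measurable_uncurry_samplePoint {W : ℝ → ℝ → ℝ} (hW : Measurable (Function.uncurry W))
    (n : ℕ) : Measurable (Function.uncurry fun u v => W (samplePoint n u) (samplePoint n v)) :=
  hW.comp ((measurable_samplePoint n).prodMap (measurable_samplePoint n))

theorem sq_sub_samplePoint_le {W : ℝ → ℝ → ℝ} {A₁ : ℝ} {n : ℕ}
    (hWrange : ∀ u ∈ Icc (0:ℝ) 1, ∀ v ∈ Icc (0:ℝ) 1, W u v ∈ Icc (0:ℝ) 1)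
    (hLip : ∀ u₁ ∈ Icc (0:ℝ) 1, ∀ v₁ ∈ Icc (0:ℝ) 1, ∀ u₂ ∈ Icc (0:ℝ) 1, ∀ v₂ ∈ Icc (0:ℝ) 1,
      |W u₂ v₂ - W u₁ v₁| ≤ A₁ * (|u₂ - u₁| + |v₂ - v₁|))
    (hn : 0 < n) {u v : ℝ} (hu : u ∈ Icc (0:ℝ) 1) (hv : v ∈ Icc (0:ℝ) 1) :
    (W u v - W (samplePoint n u) (samplePoint n v)) ^ 2
      ≤ A₁ * ((u - samplePoint n u) + (v - samplePoint n v)) := by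
  have hu' := samplePoint_mem_Icc hn hu
  have hv' := samplePoint_mem_Icc hn hv
  have hW := hWrange u hu v hv
  have hW' := hWrange _ hu' _ hv'
  have hLip' := hLip _ hu' _ hv' u hu v hv
  rw [abs_of_nonneg (sub_nonneg.2 (samplePoint_le hn u)),
    abs_of_nonneg (sub_nonneg.2 (samplePoint_le hn v))] at hLip'
  calc (W u v - W (samplePoint n u) (samplePoint n v)) ^ 2
      = |W u v - W (samplePoint n u) (samplePoint n v)| ^ 2 := (sq_abs _).symm
    _ ≤ |W u v - W (samplePoint n u) (samplePoint n v)| :=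
        pow_le_of_le_one (abs_nonneg _) (abs_sub_le_of_nonneg_of_le hW.1 hW.2 hW'.1 hW'.2)
          two_ne_zero
    _ ≤ A₁ * ((u - samplePoint n u) + (v - samplePoint n v)) := hLip'

theorem integral_sq_sub_samplePoint_le {W : ℝ → ℝ → ℝ} {A₁ : ℝ} {n : ℕ}
    (hWmeas : Measurable (Function.uncurry W))
    (hWrange : ∀ u ∈ Icc (0:ℝ) 1, ∀ v ∈ Icc (0:ℝ) 1, W u v ∈ Icc (0:ℝ) 1)
    (hLip : ∀ u₁ ∈ Icc (0:ℝ) 1, ∀ v₁ ∈ Icc (0:ℝ) 1, ∀ u₂ ∈ Icc (0:ℝ) 1, ∀ v₂ ∈ Icc (0:ℝ) 1,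
      |W u₂ v₂ - W u₁ v₁| ≤ A₁ * (|u₂ - u₁| + |v₂ - v₁|))
    (hn : 0 < n) :
    ∫ z, (W z.1 z.2 - W (samplePoint n z.1) (samplePoint n z.2)) ^ 2 ∂μ01.prod μ01
      ≤ A₁ / n := by
  have hφ := integrable_sub_samplePoint hn
  have hD : MemLp (fun z : ℝ × ℝ => W z.1 z.2 - W (samplePoint n z.1) (samplePoint n z.2)) 2
      (μ01.prod μ01) := by
    refine memLp_uncurry_of_bounded (c := 1)
      (K := fun u v => W u v - W (samplePoint n u) (samplePoint n v))
      (hWmeas.sub (measurable_uncurry_samplePoint hWmeas n)) fun u hu v hv => ?_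
    have hW := hWrange u hu v hv
    have hW' := hWrange _ (samplePoint_mem_Icc hn hu) _ (samplePoint_mem_Icc hn hv)
    exact abs_sub_le_of_nonneg_of_le hW.1 hW.2 hW'.1 hW'.2
  calc ∫ z, (W z.1 z.2 - W (samplePoint n z.1) (samplePoint n z.2)) ^ 2 ∂μ01.prod μ01
      ≤ ∫ z, A₁ * ((z.1 - samplePoint n z.1) + (z.2 - samplePoint n z.2)) ∂μ01.prod μ01 := by
        refine integral_mono_ae hD.integrable_sq
          (((hφ.comp_fst μ01).add (hφ.comp_snd μ01)).const_mul A₁) ?_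
        filter_upwards [ae_mem_Icc_prod_μ01] with z hz
        exact sq_sub_samplePoint_le hWrange hLip hn hz.1 hz.2
    _ = A₁ / n := by
        rw [integral_const_mul, integral_add (hφ.comp_fst μ01) (hφ.comp_snd μ01),
          integral_fun_fst (fun u => u - samplePoint n u),
          integral_fun_snd (fun u => u - samplePoint n u), integral_sub_samplePoint hn,
          probReal_univ, one_smul]
        field_simp
        ring

theorem graphon_step_eigenvalue_bound_general
    (W : ℝ → ℝ → ℝ) (A₁ : ℝ)
    (hWmeas : Measurable (Function.uncurry W))
    (hWrange : ∀ u ∈ Icc (0:ℝ) 1, ∀ v ∈ Icc (0:ℝ) 1, W u v ∈ Icc (0:ℝ) 1)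
    (hLip : ∀ u₁ ∈ Icc (0:ℝ) 1, ∀ v₁ ∈ Icc (0:ℝ) 1, ∀ u₂ ∈ Icc (0:ℝ) 1, ∀ v₂ ∈ Icc (0:ℝ) 1,
      |W u₂ v₂ - W u₁ v₁| ≤ A₁ * (|u₂ - u₁| + |v₂ - v₁|))
    (n : ℕ) (hn : 1 ≤ n) (k : ℕ) :
    |minmaxValue (kernelOp W) k
        - minmaxValue (kernelOp (fun u v => W (samplePoint n u) (samplePoint n v))) k|
      ≤ Real.sqrt A₁ / Real.sqrt n := by
  have hWb : ∀ u ∈ Icc (0:ℝ) 1, ∀ v ∈ Icc (0:ℝ) 1, |W u v| ≤ 1 := fun u hu v hv =>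
    abs_le.2 ⟨by linarith [(hWrange u hu v hv).1], (hWrange u hu v hv).2⟩
  have hWnb : ∀ u ∈ Icc (0:ℝ) 1, ∀ v ∈ Icc (0:ℝ) 1,
      |W (samplePoint n u) (samplePoint n v)| ≤ 1 := fun u hu v hv =>
    hWb _ (samplePoint_mem_Icc hn hu) _ (samplePoint_mem_Icc hn hv)
  rw [← Real.sqrt_div' _ n.cast_nonneg]
  refine abs_minmaxValue_sub_le (Real.sqrt_nonneg _) (fun X hX => ?_) k
  calc _ ≤ √(∫ z, (W z.1 z.2 - W (samplePoint n z.1) (samplePoint n z.2)) ^ 2 ∂μ01.prod μ01)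
          * ‖X‖ ^ 2 :=
        abs_inner_kernelOp_sub_le hWmeas (measurable_uncurry_samplePoint hWmeas n) hWb hWnb X
    _ ≤ √(A₁ / n) := by
        rw [hX, one_pow, mul_one]
        exact Real.sqrt_le_sqrt (integral_sq_sub_samplePoint_le hWmeas hWrange hLip hn)

/-- Let `W` be an `A₁`-Lipschitz graphon, `Wₙ(u,v) = W(uᵢ,uⱼ)` the step graphon
induced by sampling `W` at the `n` regularly spaced points `uᵢ = (i-1)/n`, and `T_W`, `T_{Wₙ}`
the corresponding integral operators on `L²([0,1])`.  Then for every `k ≥ 1`, the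
Courant–Fischer min-max values satisfy `|λ_k(T_W) - λ_k(T_{Wₙ})| ≤ √A₁ / √n`. -/
theorem graphon_step_eigenvalue_bound
    (W : ℝ → ℝ → ℝ) (A₁ : ℝ)
    (hWmeas : Measurable (Function.uncurry W))
    (hWrange : ∀ u ∈ Icc (0:ℝ) 1, ∀ v ∈ Icc (0:ℝ) 1, W u v ∈ Icc (0:ℝ) 1)
    (hWsym : ∀ u ∈ Icc (0:ℝ) 1, ∀ v ∈ Icc (0:ℝ) 1, W u v = W v u)
    (hLip : ∀ u₁ ∈ Icc (0:ℝ) 1, ∀ v₁ ∈ Icc (0:ℝ) 1, ∀ u₂ ∈ Icc (0:ℝ) 1, ∀ v₂ ∈ Icc (0:ℝ) 1,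
      |W u₂ v₂ - W u₁ v₁| ≤ A₁ * (|u₂ - u₁| + |v₂ - v₁|))
    (n : ℕ) (hn : 1 ≤ n) (k : ℕ) (hk : 1 ≤ k) :
    |minmaxValue (kernelOp W) k
        - minmaxValue (kernelOp (fun u v => W (samplePoint n u) (samplePoint n v))) k|
      ≤ Real.sqrt A₁ / Real.sqrt n :=
  graphon_step_eigenvalue_bound_general W A₁ hWmeas hWrange hLip n hn k
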